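/- arXiv:0912.0020 — 6 statements merged into one kernel-verified Lean document; each statement's English description precedes it below -/
import Mathlib

section
/- For any algebra A, there exists a positive integer n with A_[n] = {0} if and only if there exists a positive integer n with A_(n) = {0}; moreover, if N_1 and N_2 are the least such integers respectively, then N_1 ≤ N_2 ≤ 2^{N_1 - 2} + 1 (when N_1 ≥ 2). -/
variable (k : Type*) [CommRing k]

/-- The product of two submodules of a not-necessarily-associative `k`-algebra `A`:
the `k`-submodule spanned by all products `b * c` with `b ∈ B`, `c ∈ C`. -/
def subMul {A : Type*} [NonUnitalNonAssocRing A] [Module k A]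
    [SMulCommClass k A A] [IsScalarTower k A A] (B C : Submodule k A) : Submodule k A :=
  Submodule.span k {z | ∃ b ∈ B, ∃ c ∈ C, z = b * c}

variable (A : Type*) [NonUnitalNonAssocRing A] [Module k A]
  [SMulCommClass k A A] [IsScalarTower k A A]

/-- `weakSeries k A n` is the submodule `A_[n+1]` of the paper:
`A_[1] = A`, `A_[n+1] = A·A_[n] + A_[n]·A`. -/
def weakSeries : ℕ → Submodule k A
  | 0 => ⊤
  | n + 1 => subMul k ⊤ (weakSeries n) ⊔ subMul k (weakSeries n) ⊤

/-- `strongSeries k A n` is the submodule `A_(n+1)` of the paper: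
`A_(1) = A`, `A_(n+1) = Σ_{0<m<n+1} A_(m)·A_(n+1-m)`. -/
def strongSeries : ℕ → Submodule k A
  | 0 => ⊤
  | n + 1 => ⨆ m : Fin (n + 1), subMul k (strongSeries m) (strongSeries (n - (m : ℕ)))
  decreasing_by
  · exact m.isLt
  · exact Nat.lt_succ_of_le (Nat.sub_le n m)

/-!
Each summand `A·A_[n]`, `A_[n]·A` of `A_[n+1]` is, by induction, contained in the summand
`A_(1)·A_(n)`, resp. `A_(n)·A_(1)`, of `A_(n+1)`; hence `A_[n] ⊆ A_(n)`.
Conversely, in a product `A_(i)·A_(j)` with `i + j = N` one factor has index at least `N/2`,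
so induction on `m` gives `A_(N) ⊆ A_[m+2]` as soon as `N ≥ 2^m + 1`.
Thus `A_[N₁] = 0` forces `A_(2^(N₁-2)+1) = 0`.
-/

section

variable {k A}

lemma subMul_mono {B B' C C' : Submodule k A} (hB : B ≤ B') (hC : C ≤ C') :
    subMul k B C ≤ subMul k B' C' :=
  Submodule.span_mono fun _ ⟨b, hb, c, hc, hz⟩ => ⟨b, hB hb, c, hC hc, hz⟩

end

lemma subMul_le_strongSeries_succ {i n : ℕ} (hi : i ≤ n) :
    subMul k (strongSeries k A i) (strongSeries k A (n - i)) ≤ strongSeries k A (n + 1) := by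
  rw [strongSeries.eq_2]
  exact le_iSup_of_le (⟨i, Nat.lt_succ_of_le hi⟩ : Fin (n + 1)) le_rfl

lemma strongSeries_succ_le {n : ℕ} {B : Submodule k A}
    (h : ∀ i ≤ n, subMul k (strongSeries k A i) (strongSeries k A (n - i)) ≤ B) :
    strongSeries k A (n + 1) ≤ B := by
  rw [strongSeries.eq_2]
  exact iSup_le fun i => h i (Nat.lt_succ_iff.mp i.isLt)

lemma weakSeries_le_strongSeries (n : ℕ) : weakSeries k A n ≤ strongSeries k A n := by
  induction n with
  | zero => simp [weakSeries, strongSeries]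
  | succ n ih =>
    have htop : strongSeries k A 0 = ⊤ := by rw [strongSeries]
    rw [weakSeries]
    apply sup_le
    · calc subMul k ⊤ (weakSeries k A n)
          ≤ subMul k (strongSeries k A 0) (strongSeries k A (n - 0)) :=
            subMul_mono htop.ge ih
        _ ≤ strongSeries k A (n + 1) := subMul_le_strongSeries_succ k A n.zero_le
    · calc subMul k (weakSeries k A n) ⊤
          ≤ subMul k (strongSeries k A n) (strongSeries k A (n - n)) :=
            subMul_mono ih (by rw [Nat.sub_self, htop])
        _ ≤ strongSeries k A (n + 1) := subMul_le_strongSeries_succ k A le_rfl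

lemma strongSeries_le_weakSeries (m : ℕ) {n : ℕ} (hn : 2 ^ m ≤ n) :
    strongSeries k A n ≤ weakSeries k A (m + 1) := by
  obtain ⟨t, rfl⟩ : ∃ t, n = t + 1 := ⟨n - 1, by have := Nat.one_le_two_pow (n := m); omega⟩
  induction m generalizing t with
  | zero =>
    refine strongSeries_succ_le k A fun i _ => ?_
    exact le_sup_of_le_left (subMul_mono le_top le_top)
  | succ m ih =>
    refine strongSeries_succ_le k A fun i _ => ?_
    rw [weakSeries]
    -- The indices `i + 1` and `t - i + 1` of the two factors add up to `t + 2 ≥ 2 ^ (m + 1) + 1`.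
    rcases (by omega : 2 ^ m ≤ i ∨ 2 ^ m ≤ t - i) with hbig | hbig
    · obtain ⟨s, rfl⟩ : ∃ s, i = s + 1 := ⟨i - 1, by have := Nat.one_le_two_pow (n := m); omega⟩
      exact le_sup_of_le_right (subMul_mono (ih s hbig) le_top)
    · obtain ⟨s, hs⟩ : ∃ s, t - i = s + 1 :=
        ⟨t - i - 1, by have := Nat.one_le_two_pow (n := m); omega⟩
      rw [hs] at hbig ⊢
      exact le_sup_of_le_left (subMul_mono le_top (ih s hbig))

lemma strongSeries_eq_bot_of_weakSeries_eq_bot {m : ℕ} (h : weakSeries k A (m + 1) = ⊥) :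
    strongSeries k A (2 ^ m) = ⊥ :=
  eq_bot_mono (strongSeries_le_weakSeries k A m le_rfl) h

/-- `A` satisfies `A_[n] = 0` for some `n ≥ 1` iff it satisfies `A_(n) = 0` for
some `n ≥ 1`; and if `N₁`, `N₂` are the least such indices, then `N₁ ≤ N₂`, and moreover
`N₂ ≤ 2^(N₁ - 2) + 1` when `N₁ ≥ 2`.  (Here `weakSeries k A (n-1) = A_[n]` and
`strongSeries k A (n-1) = A_(n)`.) -/
theorem weakSeries_bot_iff_strongSeries_bot :
    ((∃ n : ℕ, weakSeries k A n = ⊥) ↔ (∃ n : ℕ, strongSeries k A n = ⊥)) ∧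
    (∀ N₁ N₂ : ℕ, 1 ≤ N₁ → 1 ≤ N₂ →
      weakSeries k A (N₁ - 1) = ⊥ →
      (∀ m : ℕ, 1 ≤ m → m < N₁ → weakSeries k A (m - 1) ≠ ⊥) →
      strongSeries k A (N₂ - 1) = ⊥ →
      (∀ m : ℕ, 1 ≤ m → m < N₂ → strongSeries k A (m - 1) ≠ ⊥) →
      N₁ ≤ N₂ ∧ (2 ≤ N₁ → N₂ ≤ 2 ^ (N₁ - 2) + 1)) := by
  refine ⟨⟨fun ⟨n, hn⟩ => ?_, fun ⟨n, hn⟩ => ⟨n, eq_bot_mono (weakSeries_le_strongSeries k A n) hn⟩⟩,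
    fun N₁ N₂ _ hN₂ hW hWmin hS hSmin => ⟨?_, fun h2 => ?_⟩⟩
  · cases n with
    | zero => exact ⟨0, by rwa [strongSeries]⟩
    | succ m => exact ⟨2 ^ m, strongSeries_eq_bot_of_weakSeries_eq_bot k A hn⟩
  · by_contra! h
    exact hWmin N₂ hN₂ h (eq_bot_mono (weakSeries_le_strongSeries k A _) hS)
  · by_contra! h
    rw [show N₁ - 1 = N₁ - 2 + 1 by omega] at hW
    exact hSmin _ (Nat.le_add_left 1 _) h
      (by simpa using strongSeries_eq_bot_of_weakSeries_eq_bot k A hW)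
end

section
/- Let A be the k-algebra that is free as a k-module on basis {x_1, …, x_{n-1}} with multiplication x_m x_m = x_{m+1} for 1 ≤ m ≤ n-2 and all other products of basis elements zero. Then the least N_1 with A_[N_1] = {0} equals n, and the least N_2 with A_(N_2) = {0} equals 2^{n-2} + 1, so the bound N_2 ≤ 2^{N_1-2}+1 is achieved. -/
variable (k : Type*) [CommRing k]

variable (A : Type*) [NonUnitalNonAssocRing A] [Module k A]
  [SMulCommClass k A A] [IsScalarTower k A A]

/-!
Write `x_0, …, x_{N-1}` for the basis and `V(s)` for the span of the `x_j` with `j ∈ s`.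
Since `x_i x_j` is `x_{i+1}` or `0`, and is nonzero only for `i = j`, the product of
`V(s)` and `V(t)` is `V((s ∩ t) + 1)`. By induction `A_[m+1] = V({j | m ≤ j})` and
`A_(m+1) = V({j | m < 2^j})`; for the latter, `x_{i+1}` occurs in some `A_(a+1)·A_(m-a+1)`
iff `a, m - a < 2^i` for some `a`, i.e. iff `m + 1 < 2^(i+1)`. Hence `A_[m]` vanishes
exactly when `m ≥ N + 1` and `A_(m)` exactly when `m > 2^(N-1)`.
-/

open Submodule Set
open scoped Pointwise

section basisSpan

variable {R M : Type*} [Semiring R] [AddCommMonoid M] [Module R M]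

def basisSpan {N : ℕ} (b : Module.Basis (Fin N) R M) (s : Set ℕ) : Submodule R M :=
  span R (b '' (Fin.val ⁻¹' s))

variable {N : ℕ} (b : Module.Basis (Fin N) R M)

theorem basis_mem_basisSpan {s : Set ℕ} {i : Fin N} (hi : (i : ℕ) ∈ s) :
    b i ∈ basisSpan b s :=
  subset_span (mem_image_of_mem b hi)

theorem basisSpan_univ : basisSpan b univ = ⊤ := by
  rw [basisSpan, preimage_univ, image_univ, b.span_eq]

theorem basisSpan_eq_bot_iff [Nontrivial R] {s : Set ℕ} :
    basisSpan b s = ⊥ ↔ ∀ i : Fin N, (i : ℕ) ∉ s := by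
  simp [basisSpan, span_eq_bot, b.ne_zero]

theorem iSup_basisSpan {ι : Sort*} (s : ι → Set ℕ) :
    ⨆ a, basisSpan b (s a) = basisSpan b (⋃ a, s a) := by
  simp only [basisSpan, preimage_iUnion, image_iUnion, span_iUnion]

end basisSpan

variable {k A}

theorem subMul_eq_map₂ (B C : Submodule k A) : subMul k B C = map₂ (LinearMap.mul k A) B C := by
  rw [map₂_eq_span_image2, subMul]
  congr 1
  ext z
  simp [Set.mem_mul, eq_comm]

theorem subMul_span_span (s t : Set A) : subMul k (span k s) (span k t) = span k (s * t) := by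
  rw [subMul_eq_map₂, map₂_span_span]
  rfl

theorem exists_lt_two_pow_and_sub_lt_two_pow_iff (m i : ℕ) :
    (∃ a ≤ m, a < 2 ^ i ∧ m - a < 2 ^ i) ↔ m + 1 < 2 ^ (i + 1) := by
  rw [pow_succ]
  constructor
  · rintro ⟨a, -, ha, hma⟩
    omega
  · intro h
    exact ⟨(m + 1) / 2, by omega, by omega, by omega⟩

theorem iUnion_image_succ_inter_lt_two_pow (m : ℕ) :
    ⋃ a : Fin (m + 1), (· + 1) '' ({j | (a : ℕ) < 2 ^ j} ∩ {j | m - a < 2 ^ j}) =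
      {j | m + 1 < 2 ^ j} := by
  ext (_ | i)
  · simp
  · simp only [mem_iUnion, mem_image, add_left_inj, exists_eq_right, mem_inter_iff, mem_ofPred]
    rw [← exists_lt_two_pow_and_sub_lt_two_pow_iff]
    exact ⟨fun ⟨a, h⟩ => ⟨a, by omega, h⟩, fun ⟨a, ha, h⟩ => ⟨⟨a, by omega⟩, h⟩⟩

section squareShift

variable {N : ℕ} (b : Module.Basis (Fin N) k A)
variable (hmul : ∀ (i : Fin N) (hi : (i : ℕ) + 1 < N), b i * b i = b ⟨(i : ℕ) + 1, hi⟩)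
  (hzero : ∀ i j : Fin N, (i ≠ j ∨ (i : ℕ) + 1 = N) → b i * b j = 0)
include hmul hzero

theorem subMul_basisSpan (s t : Set ℕ) :
    subMul k (basisSpan b s) (basisSpan b t) = basisSpan b ((· + 1) '' (s ∩ t)) := by
  unfold basisSpan
  rw [subMul_span_span]
  apply le_antisymm
  · rw [span_le, mul_subset_iff]
    rintro _ ⟨i, hi, rfl⟩ _ ⟨j, hj, rfl⟩
    obtain rfl | hij := eq_or_ne i j
    · by_cases hlt : (i : ℕ) + 1 < N
      · rw [hmul i hlt]
        exact basis_mem_basisSpan b ⟨i, ⟨hi, hj⟩, rfl⟩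
      · rw [hzero i i (.inr (by omega))]
        exact zero_mem _
    · rw [hzero i j (.inl hij)]
      exact zero_mem _
  · rw [span_le]
    rintro _ ⟨j, ⟨i, ⟨hs, ht⟩, hij : i + 1 = j⟩, rfl⟩
    have hlt : i + 1 < N := hij ▸ j.isLt
    rw [show j = ⟨i + 1, hlt⟩ from Fin.ext hij.symm, ← hmul ⟨i, by omega⟩ hlt]
    exact subset_span (mul_mem_mul (mem_image_of_mem b hs) (mem_image_of_mem b ht))

theorem weakSeries_eq_basisSpan (m : ℕ) : weakSeries k A m = basisSpan b (Ici m) := by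
  induction m with
  | zero => rw [weakSeries, ← Nat.bot_eq_zero, Ici_bot, basisSpan_univ]
  | succ m ih =>
    rw [weakSeries, ih, ← basisSpan_univ b, subMul_basisSpan b hmul hzero,
      subMul_basisSpan b hmul hzero, univ_inter, inter_univ, sup_idem, image_add_const_Ici]

theorem strongSeries_eq_basisSpan (m : ℕ) : strongSeries k A m = basisSpan b {j | m < 2 ^ j} := by
  induction m using Nat.strong_induction_on with
  | _ m ih =>
    match m with
    | 0 =>
      rw [strongSeries, ← basisSpan_univ b]
      exact congrArg _ (eq_univ_of_forall Nat.two_pow_pos).symm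
    | m + 1 =>
      have hterm (a : Fin (m + 1)) :
          subMul k (strongSeries k A a) (strongSeries k A (m - a)) =
            basisSpan b ((· + 1) '' ({j | (a : ℕ) < 2 ^ j} ∩ {j | m - a < 2 ^ j})) := by
        rw [ih a (by omega), ih (m - a) (by omega), subMul_basisSpan b hmul hzero]
      rw [strongSeries, iSup_congr hterm, iSup_basisSpan, iUnion_image_succ_inter_lt_two_pow]

end squareShift

/-- if `A` is free as a `k`-module on a basis `x_1, …, x_{n-1}` (indexed here by
`Fin (n-1)`), with `x_m x_m = x_{m+1}` for `1 ≤ m ≤ n-2` and all other products of basis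
elements zero, then the least `N₁` with `A_[N₁] = 0` is `n`, and the least `N₂` with
`A_(N₂) = 0` is `2^(n-2) + 1`, so the bound `N₂ ≤ 2^(N₁-2) + 1` is achieved.
(Indices are shifted by one: `weakSeries k A (m-1) = A_[m]`, `strongSeries k A (m-1) = A_(m)`.) -/
theorem weakSeries_strongSeries_of_basis [Nontrivial k] (n : ℕ) (hn : 2 ≤ n)
    (b : Module.Basis (Fin (n - 1)) k A)
    (hmul : ∀ (i : Fin (n - 1)) (hi : (i : ℕ) + 1 < n - 1), b i * b i = b ⟨(i : ℕ) + 1, hi⟩)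
    (hzero : ∀ i j : Fin (n - 1), (i ≠ j ∨ (i : ℕ) + 1 = n - 1) → b i * b j = 0) :
    (weakSeries k A (n - 1) = ⊥ ∧ ∀ m : ℕ, m < n - 1 → weakSeries k A m ≠ ⊥) ∧
    (strongSeries k A (2 ^ (n - 2)) = ⊥ ∧
      ∀ m : ℕ, m < 2 ^ (n - 2) → strongSeries k A m ≠ ⊥) := by
  simp only [weakSeries_eq_basisSpan b hmul hzero, strongSeries_eq_basisSpan b hmul hzero,
    ne_eq, basisSpan_eq_bot_iff, not_forall, mem_Ici, mem_ofPred_eq, not_le, not_lt]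
  refine ⟨⟨fun i => i.isLt, fun m hm => ⟨⟨m, hm⟩, le_rfl⟩⟩, fun i => ?_,
    fun m hm => ⟨⟨n - 2, by omega⟩, hm⟩⟩
  exact Nat.pow_le_pow_right two_pos (by omega)
end

section
/- Let K be an associative unital ring, h : A → B a surjective homomorphism of right K-modules, Endo(A; ker h) the subring of Endo(A) consisting of endomorphisms carrying ker(h) into itself, R a Jacobson radical subring of Endo(A), and suppose B is Hopfian as a K-module. Then R ∩ Endo(A; ker h) is a Jacobson radical ring, and its image in Endo(B) is a Jacobson radical subring of Endo(B). -/
/-!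
An endomorphism `u` of `A` preserving `ker h` induces an endomorphism of `B`, and if `u` has a
right inverse the induced map is surjective, hence injective since `B` is Hopfian. Applied to
`u = 1 + r`, whose right inverse is `1 + s` for the quasiinverse `s` of `r` in `R`, this shows
that `1 + s`, and so `s`, preserves `ker h` as well. The quasiinverse identities then descend
along the surjection `h` to the induced endomorphisms of `B`.
-/

theorem LinearMap.exists_comp_eq_of_ker_le {K A B C : Type*} [Ring K] [AddCommGroup A]
    [Module K A] [AddCommGroup B] [Module K B] [AddCommGroup C] [Module K C]
    {h : A →ₗ[K] B} (hs : Function.Surjective h) {g : A →ₗ[K] C}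
    (hle : LinearMap.ker h ≤ LinearMap.ker g) : ∃ g' : B →ₗ[K] C, g' ∘ₗ h = g := by
  refine ⟨(LinearMap.ker h).liftQ g hle ∘ₗ (h.quotKerEquivOfSurjective hs).symm.toLinearMap, ?_⟩
  ext a
  have : (h.quotKerEquivOfSurjective hs).symm (h a) = Submodule.Quotient.mk a := by
    rw [LinearEquiv.symm_apply_eq]
    rfl
  simp [this]

section InducedEndomorphism

variable {K A B : Type*} [Ring K] [AddCommGroup A] [Module K A] [AddCommGroup B] [Module K B]
  {h : A →ₗ[K] B}

theorem exists_induced_endomorphism (hs : Function.Surjective h) {f : Module.End K A}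
    (hf : ∀ a, h a = 0 → h (f a) = 0) : ∃ f' : Module.End K B, ∀ a, f' (h a) = h (f a) := by
  obtain ⟨f', hf'⟩ := LinearMap.exists_comp_eq_of_ker_le hs (g := h ∘ₗ f) fun a ha => hf a ha
  exact ⟨f', LinearMap.congr_fun hf'⟩

theorem ker_invariant_of_mul_eq_one (hs : Function.Surjective h)
    (hhopf : ∀ g : B →ₗ[K] B, Function.Surjective g → Function.Injective g)
    {u v : Module.End K A} (hu : ∀ a, h a = 0 → h (u a) = 0) (huv : u * v = 1) :
    ∀ a, h a = 0 → h (v a) = 0 := by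
  obtain ⟨g, hg⟩ := exists_induced_endomorphism hs hu
  have hgv : ∀ a, g (h (v a)) = h a := fun a => by
    rw [hg, ← Module.End.mul_apply, huv, Module.End.one_apply]
  have hg_inj : Function.Injective g := hhopf g fun b => by
    obtain ⟨a, rfl⟩ := hs b
    exact ⟨h (v a), hgv a⟩
  intro a ha
  exact hg_inj (by rw [hgv, ha, map_zero])

theorem ker_invariant_of_add_add_mul_eq_zero (hs : Function.Surjective h)
    (hhopf : ∀ g : B →ₗ[K] B, Function.Surjective g → Function.Injective g)
    {r s : Module.End K A} (hr : ∀ a, h a = 0 → h (r a) = 0) (hrs : r + s + r * s = 0) :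
    ∀ a, h a = 0 → h (s a) = 0 := by
  have hmul : (1 + r) * (1 + s) = 1 :=
    calc (1 + r) * (1 + s) = 1 + (r + s + r * s) := by noncomm_ring
      _ = 1 := by rw [hrs, add_zero]
  have hr1 : ∀ a, h a = 0 → h ((1 + r) a) = 0 := fun a ha => by
    simp [ha, hr a ha]
  intro a ha
  have hs1 := ker_invariant_of_mul_eq_one hs hhopf hr1 hmul a ha
  simpa [ha] using hs1

theorem induced_add_add_mul_eq_zero (hs : Function.Surjective h)
    {r s : Module.End K A} {r' s' : Module.End K B}
    (hr : ∀ a, r' (h a) = h (r a)) (hs' : ∀ a, s' (h a) = h (s a)) (hrs : r + s + r * s = 0) :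
    r' + s' + r' * s' = 0 := by
  ext b
  obtain ⟨a, rfl⟩ := hs b
  have := congr_arg h (LinearMap.congr_fun hrs a)
  simpa [hr, hs'] using this

end InducedEndomorphism

/-- Let `K` be an associative unital ring, `h : A → B` a surjective
homomorphism of `K`-modules, and `R` a Jacobson radical subring of `Endo(A)` (i.e. every
element of `R` has a quasiinverse in `R`).  If `B` is Hopfian as a `K`-module, then the
set of elements of `R` carrying `ker h` into itself is again a Jacobson radical ring, and
its image in `Endo(B)` (each such endomorphism of `A` inducing one of `B`) is a Jacobson
radical subring of `Endo(B)`. -/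
theorem radical_inter_ker_preserving (K A B : Type*) [Ring K]
    [AddCommGroup A] [Module K A] [AddCommGroup B] [Module K B]
    (h : A →ₗ[K] B) (hs : Function.Surjective h)
    (R : NonUnitalSubring (Module.End K A))
    (hrad : ∀ r ∈ R, ∃ s ∈ R, r + s + r * s = 0 ∧ r + s + s * r = 0)
    (hhopf : ∀ g : B →ₗ[K] B, Function.Surjective g → Function.Injective g) :
    -- `R ∩ Endo(A; ker h)` is a radical ring:
    (∀ r ∈ R, (∀ a : A, h a = 0 → h (r a) = 0) →
      ∃ s ∈ R, (∀ a : A, h a = 0 → h (s a) = 0) ∧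
        r + s + r * s = 0 ∧ r + s + s * r = 0) ∧
    -- and its image in `Endo(B)` is a radical subring of `Endo(B)`:
    (∀ r' : Module.End K B,
      (∃ r ∈ R, (∀ a : A, h a = 0 → h (r a) = 0) ∧ ∀ a : A, r' (h a) = h (r a)) →
      ∃ s' : Module.End K B,
        (∃ s ∈ R, (∀ a : A, h a = 0 → h (s a) = 0) ∧ ∀ a : A, s' (h a) = h (s a)) ∧
        r' + s' + r' * s' = 0 ∧ r' + s' + s' * r' = 0) := by
  have hker : ∀ r ∈ R, (∀ a : A, h a = 0 → h (r a) = 0) →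
      ∃ s ∈ R, (∀ a : A, h a = 0 → h (s a) = 0) ∧ r + s + r * s = 0 ∧ r + s + s * r = 0 := by
    intro r hrR hr
    obtain ⟨s, hsR, hrs, hsr⟩ := hrad r hrR
    exact ⟨s, hsR, ker_invariant_of_add_add_mul_eq_zero hs hhopf hr hrs, hrs, hsr⟩
  refine ⟨hker, ?_⟩
  rintro r' ⟨r, hrR, hr, hr'⟩
  obtain ⟨s, hsR, hsk, hrs, hsr⟩ := hker r hrR hr
  obtain ⟨s', hs'⟩ := exists_induced_endomorphism hs hsk
  refine ⟨s', ⟨s, hsR, hsk, hs'⟩, induced_add_add_mul_eq_zero hs hr' hs' hrs, ?_⟩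
  rw [add_comm r']
  exact induced_add_add_mul_eq_zero hs hs' hr' (by rwa [add_comm s])
end

section
/- A Jacobson radical associative k-algebra B cannot contain a nonzero finitely generated idempotent subalgebra S = S². -/
/-!
Let `M` be the `k`-span of a finite generating set of `S` and `B • M` the span of all products
`b * m` with `m ∈ M`. Since `M + B • M` is closed under multiplication it contains `S`, so
`S = S²` lies in `B • S ⊆ B • M`; in particular `M ⊆ B • M`. This forces `M = 0` by a Nakayama
argument: writing `M = k a + N`, we get `a = b * a + y` with `y ∈ B • N`, and the quasi-inverse
of `-b` solves this for `a ∈ B • N`, whence `N ⊆ B • N` and induction applies.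
-/

theorem IsQuasiregular.mem_of_sub_mul_mem {B : Type*} [NonUnitalRing B] {b : B}
    (hb : IsQuasiregular (-b)) {L : AddSubmonoid B} (hL : ∀ x, ∀ y ∈ L, x * y ∈ L) {a : B}
    (h : a - b * a ∈ L) : a ∈ L := by
  -- `(1 + c) * (1 - b) = 1` in the unitization
  obtain ⟨c, -, hc⟩ := isQuasiregular_iff.1 hb
  have hcb : c * b = c - b := by
    rw [mul_neg] at hc
    rw [← sub_eq_zero, ← neg_eq_zero, ← hc]
    abel
  have ha : a = (a - b * a) + c * (a - b * a) := by
    rw [mul_sub, ← mul_assoc, hcb, sub_mul]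
    abel
  rw [ha]
  exact add_mem h (hL c _ h)

namespace Submodule

section Semiring

variable {k B : Type*} [Semiring k] [NonUnitalSemiring B] [Module k B]

/-- `B • N`; as `B` has no unit, it need not contain `N`. -/
def leftMulSpan (N : Submodule k B) : Submodule k B :=
  span k {z | ∃ b, ∃ y ∈ N, b * y = z}

variable {N N' P : Submodule k B}

theorem mul_mem_leftMulSpan (b : B) {y : B} (hy : y ∈ N) : b * y ∈ N.leftMulSpan :=
  subset_span ⟨b, y, hy, rfl⟩

theorem leftMulSpan_le_iff : N.leftMulSpan ≤ P ↔ ∀ b, ∀ y ∈ N, b * y ∈ P := by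
  rw [leftMulSpan, span_le]
  exact ⟨fun h b y hy => h ⟨b, y, hy, rfl⟩, fun h _ ⟨b, y, hy, hz⟩ => hz ▸ h b y hy⟩

theorem leftMulSpan_mono (h : N ≤ N') : N.leftMulSpan ≤ N'.leftMulSpan :=
  leftMulSpan_le_iff.2 fun b _ hy => mul_mem_leftMulSpan b (h hy)

@[simp]
theorem leftMulSpan_bot : (⊥ : Submodule k B).leftMulSpan = ⊥ :=
  eq_bot_iff.2 <| leftMulSpan_le_iff.2 fun b y hy => by simp [(mem_bot k).1 hy]

theorem leftMulSpan_sup : (N ⊔ N').leftMulSpan = N.leftMulSpan ⊔ N'.leftMulSpan := by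
  refine le_antisymm (leftMulSpan_le_iff.2 fun b y hy => ?_)
    (sup_le (leftMulSpan_mono le_sup_left) (leftMulSpan_mono le_sup_right))
  obtain ⟨n, hn, n', hn', rfl⟩ := mem_sup.1 hy
  rw [mul_add]
  exact add_mem_sup (mul_mem_leftMulSpan b hn) (mul_mem_leftMulSpan b hn')

end Semiring

section Algebra

variable {k B : Type*} [CommSemiring k] [NonUnitalSemiring B] [Module k B]
  [SMulCommClass k B B] {N : Submodule k B}

theorem mul_mem_leftMulSpan_of_mem (b : B) {y : B} (hy : y ∈ N.leftMulSpan) :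
    b * y ∈ N.leftMulSpan := by
  induction hy using span_induction with
  | mem z hz =>
    obtain ⟨c, y, hy, rfl⟩ := hz
    simpa only [mul_assoc] using mul_mem_leftMulSpan (b * c) hy
  | zero => simp
  | add x y _ _ hx hy => rw [mul_add]; exact add_mem hx hy
  | smul t x _ hx => rw [mul_smul_comm]; exact smul_mem _ _ hx

theorem leftMulSpan_leftMulSpan_le : N.leftMulSpan.leftMulSpan ≤ N.leftMulSpan :=
  leftMulSpan_le_iff.2 fun b _ hy => mul_mem_leftMulSpan_of_mem b hy

theorem leftMulSpan_sup_leftMulSpan : (N ⊔ N.leftMulSpan).leftMulSpan = N.leftMulSpan := by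
  rw [leftMulSpan_sup, sup_eq_left]
  exact leftMulSpan_leftMulSpan_le

theorem leftMulSpan_span_singleton [IsScalarTower k B B] (a : B) :
    (k ∙ a).leftMulSpan = LinearMap.range (LinearMap.mulRight k a) := by
  refine le_antisymm (leftMulSpan_le_iff.2 fun b y hy => ?_) ?_
  · obtain ⟨t, rfl⟩ := mem_span_singleton.1 hy
    exact ⟨t • b, by simp [mul_smul_comm]⟩
  · rintro _ ⟨b, rfl⟩
    exact mul_mem_leftMulSpan b (mem_span_singleton_self a)

theorem _root_.NonUnitalAlgebra.adjoin_toSubmodule_le_span_sup_leftMulSpan [IsScalarTower k B B]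
    (s : Set B) :
    (NonUnitalAlgebra.adjoin k s).toSubmodule ≤ span k s ⊔ (span k s).leftMulSpan := by
  set T := span k s ⊔ (span k s).leftMulSpan
  have hT : ∀ x y, x ∈ T → y ∈ T → x * y ∈ T := fun x y _ hy =>
    mem_sup_right <| leftMulSpan_sup_leftMulSpan.le (mul_mem_leftMulSpan x hy)
  exact NonUnitalAlgebra.adjoin_le (S := T.toNonUnitalSubalgebra hT)
    fun x hx => mem_sup_left (subset_span hx)

end Algebra

section Ring

variable {k B : Type*} [CommSemiring k] [NonUnitalRing B] [Module k B]
  [SMulCommClass k B B] [IsScalarTower k B B]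

theorem eq_bot_of_le_leftMulSpan (hq : ∀ x : B, IsQuasiregular x) {M : Submodule k B}
    (hM : M.FG) (h : M ≤ M.leftMulSpan) : M = ⊥ := by
  classical
  obtain ⟨s, rfl⟩ := hM
  induction s using Finset.induction_on with
  | empty => simp
  | insert a s _ ih =>
    rw [Finset.coe_insert, span_insert] at h ⊢
    set N := span k (s : Set B)
    have ha : a ∈ N.leftMulSpan := by
      have := h (mem_sup_left (mem_span_singleton_self a))
      rw [leftMulSpan_sup, leftMulSpan_span_singleton, mem_sup] at this
      obtain ⟨_, ⟨b, rfl⟩, y, hy, hay⟩ := this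
      rw [LinearMap.mulRight_apply] at hay
      exact (hq (-b)).mem_of_sub_mul_mem (L := N.leftMulSpan.toAddSubmonoid)
        (fun x _ => mul_mem_leftMulSpan_of_mem x) (eq_sub_of_add_eq' hay ▸ hy)
    have hle : ((k ∙ a) ⊔ N).leftMulSpan ≤ N.leftMulSpan := by
      rw [leftMulSpan_sup, sup_le_iff, leftMulSpan_le_iff]
      refine ⟨fun b y hy => ?_, le_rfl⟩
      obtain ⟨t, rfl⟩ := mem_span_singleton.1 hy
      rw [mul_smul_comm]
      exact smul_mem _ t (mul_mem_leftMulSpan_of_mem b ha)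
    have hN : N = ⊥ := ih (le_sup_right.trans (h.trans hle))
    rw [eq_bot_iff, ← leftMulSpan_bot, ← hN]
    exact h.trans hle

end Ring

end Submodule

/-- a Jacobson radical associative `k`-algebra `B` cannot contain a nonzero
finitely generated idempotent subalgebra `S = S²`. -/
theorem no_fg_idempotent_subalgebra (k B : Type*) [CommRing k] [NonUnitalRing B]
    [Module k B] [SMulCommClass k B B] [IsScalarTower k B B]
    (hrad : ∀ b : B, ∃ c : B, b + c + b * c = 0 ∧ b + c + c * b = 0)
    (S : NonUnitalSubalgebra k B)
    (hfg : ∃ s : Finset B, NonUnitalAlgebra.adjoin k (s : Set B) = S)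
    (hidem : Submodule.span k {z : B | ∃ a ∈ S, ∃ b ∈ S, z = a * b} = S.toSubmodule) :
    S = ⊥ := by
  obtain ⟨s, rfl⟩ := hfg
  have hq (b : B) : IsQuasiregular b := isQuasiregular_iff.2 <|
    (hrad b).imp fun c hc => ⟨by rw [add_comm c]; exact hc.1, hc.2⟩
  set M := Submodule.span k (s : Set B)
  set T := (NonUnitalAlgebra.adjoin k (s : Set B)).toSubmodule
  have hTM : T ≤ M ⊔ M.leftMulSpan :=
    NonUnitalAlgebra.adjoin_toSubmodule_le_span_sup_leftMulSpan _
  have hTT : T ≤ T.leftMulSpan := by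
    refine hidem.ge.trans (Submodule.span_le.2 ?_)
    rintro _ ⟨a, -, b, hb, rfl⟩
    exact Submodule.mul_mem_leftMulSpan a hb
  have hMM : M ≤ M.leftMulSpan := calc
    M ≤ T := Submodule.span_le.2 (NonUnitalAlgebra.subset_adjoin k)
    _ ≤ T.leftMulSpan := hTT
    _ ≤ (M ⊔ M.leftMulSpan).leftMulSpan := Submodule.leftMulSpan_mono hTM
    _ = M.leftMulSpan := Submodule.leftMulSpan_sup_leftMulSpan
  have hM : M = ⊥ := Submodule.eq_bot_of_le_leftMulSpan hq (Submodule.fg_span s.finite_toSet) hMM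
  rw [hM, Submodule.leftMulSpan_bot, bot_sup_eq] at hTM
  exact eq_bot_iff.2 fun x hx => NonUnitalAlgebra.mem_bot.2 ((Submodule.mem_bot k).1 (hTM hx))
end

section
/- If B is a k-module of finite length, then any Jacobson radical subalgebra R ⊆ Endo(B) is nilpotent: R^n = {0} for some n. -/
/-!
The submodules `Rⁿ B` form a descending chain, which stabilises at some `M` with `M = R M`
because `B` is Artinian. Since `B` is Noetherian, `M` is finitely generated, and Nakayama's
lemma applies with left quasi-inverses in place of a Jacobson radical: writing a generator as
`m = r m + w`, the inverse `1 + u` of `1 - r` gives `m = w + u w`, so `m` can be dropped from the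
generators. Hence `M = 0`, and `Rⁿ = 0` because `Endo(B)` acts faithfully on `B`.
-/

namespace Submodule

variable {k A M : Type*} [CommRing k] [Ring A] [Algebra k A] [AddCommGroup M] [Module k M]
  [Module A M] [IsScalarTower k A M] {p : Submodule k A}

theorem exists_smul_eq_of_mem_smul_span_singleton {m x : M} (hx : x ∈ p • (k ∙ m)) :
    ∃ r ∈ p, r • m = x := by
  refine smul_induction_on hx (fun r hr n hn => ?_) fun x y hx hy => ?_
  · obtain ⟨c, rfl⟩ := mem_span_singleton.1 hn
    exact ⟨c • r, p.smul_mem c hr, by rw [smul_assoc, smul_comm]⟩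
  · obtain ⟨r, hr, rfl⟩ := hx
    obtain ⟨s, hs, rfl⟩ := hy
    exact ⟨r + s, add_mem hr hs, add_smul r s m⟩

theorem smul_smul_le_of_mul_le (hmul : p * p ≤ p) (N : Submodule k M) :
    p • p • N ≤ p • N := by
  rw [← Submodule.smul_assoc]
  exact smul_mono_left hmul

theorem mem_smul_of_mem_smul_span_singleton_sup (hmul : p * p ≤ p)
    (hquasi : ∀ r ∈ p, ∃ u ∈ p, r + u + u * r = 0) {m : M} {N : Submodule k M}
    (hm : m ∈ p • ((k ∙ m) ⊔ N)) : m ∈ p • N := by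
  rw [smul_sup] at hm
  obtain ⟨_, hx, w, hw, hmw⟩ := mem_sup.1 hm
  obtain ⟨r, hr, rfl⟩ := exists_smul_eq_of_mem_smul_span_singleton hx
  obtain ⟨u, hu, hur⟩ := hquasi (-r) (neg_mem hr)
  have hinv : (1 + u) * (1 - r) = 1 :=
    calc (1 + u) * (1 - r) = 1 + (-r + u + u * -r) := by noncomm_ring
      _ = 1 := by rw [hur, add_zero]
  have hw' : (1 - r) • m = w := by rw [sub_smul, one_smul, sub_eq_of_eq_add' hmw.symm]
  have hm_eq : m = w + u • w :=
    calc m = ((1 + u) * (1 - r)) • m := by rw [hinv, one_smul]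
      _ = (1 + u) • w := by rw [mul_smul, hw']
      _ = w + u • w := by rw [add_smul, one_smul]
  rw [hm_eq]
  exact add_mem hw (smul_smul_le_of_mul_le hmul N (smul_mem_smul hu hw))

theorem eq_bot_of_fg_of_le_smul (hmul : p * p ≤ p)
    (hquasi : ∀ r ∈ p, ∃ u ∈ p, r + u + u * r = 0) {N : Submodule k M} (hN : N.FG)
    (hle : N ≤ p • N) : N = ⊥ := by
  classical
  obtain ⟨s, rfl⟩ := hN
  induction s using Finset.induction_on with
  | empty => simp
  | insert m t _ ih =>
    rw [Finset.coe_insert, span_insert] at hle ⊢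
    set N := span k (t : Set M)
    have hm : m ∈ p • N := mem_smul_of_mem_smul_span_singleton_sup hmul hquasi
      (hle (mem_sup_left (mem_span_singleton_self m)))
    have hsup : (k ∙ m) ⊔ N ≤ p • N ⊔ N :=
      sup_le_sup_right ((span_singleton_le_iff_mem _ _).2 hm) N
    have hN : N = ⊥ := ih <|
      calc N ≤ p • ((k ∙ m) ⊔ N) := le_sup_right.trans hle
        _ ≤ p • (p • N ⊔ N) := smul_mono le_rfl hsup
        _ ≤ p • N := by rw [smul_sup]; exact sup_le (smul_smul_le_of_mul_le hmul N) le_rfl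
    rw [hN, smul_bot] at hm
    rw [hN, (mem_bot k).1 hm, span_singleton_eq_bot.2 rfl, bot_sup_eq]

theorem exists_pow_smul_top_eq_bot [IsArtinian k M] [IsNoetherian k M] (hmul : p * p ≤ p)
    (hquasi : ∀ r ∈ p, ∃ u ∈ p, r + u + u * r = 0) :
    ∃ n, 0 < n ∧ p ^ n • (⊤ : Submodule k M) = ⊥ := by
  have hanti : Antitone fun n => p ^ n • (⊤ : Submodule k M) :=
    antitone_nat_of_succ_le fun n => by
      rw [pow_succ]
      exact (Submodule.smul_assoc _ _ _).le.trans (smul_mono le_rfl le_top)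
  obtain ⟨n, hn⟩ := WellFoundedLT.antitone_chain_condition hanti
  have hstable : p ^ n • (⊤ : Submodule k M) = p • p ^ n • ⊤ := by
    rw [← Submodule.smul_assoc]
    change _ = (p * p ^ n) • ⊤
    rw [← pow_succ', ← hn (n + 1) n.le_succ]
  have hbot := eq_bot_of_fg_of_le_smul hmul hquasi (IsNoetherian.noetherian _) hstable.le
  exact ⟨n + 1, n.succ_pos, (hn (n + 1) n.le_succ).symm.trans hbot⟩

theorem eq_bot_of_smul_top_eq_bot [FaithfulSMul A M] (h : p • (⊤ : Submodule k M) = ⊥) :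
    p = ⊥ := by
  refine eq_bot_iff.2 fun r hr => (mem_bot k).2 <| eq_of_smul_eq_smul (α := M) fun m => ?_
  rw [zero_smul]
  exact (mem_bot k).1 (h ▸ smul_mem_smul hr mem_top)

end Submodule

/-- if `B` is a `k`-module of finite length, then any Jacobson radical
subalgebra `R` of `Endo(B)` (every element of `R` is quasiinvertible within `R`) is
nilpotent: `R^n = 0` for some `n ≥ 1`. -/
theorem radical_subalgebra_of_finite_length_nilpotent (k B : Type*) [CommRing k]
    [AddCommGroup B] [Module k B] (hlen : IsFiniteLength k B)
    (R : NonUnitalSubalgebra k (Module.End k B))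
    (hrad : ∀ r ∈ R, ∃ s ∈ R, r + s + r * s = 0 ∧ r + s + s * r = 0) :
    ∃ n : ℕ, 0 < n ∧ R.toSubmodule ^ n = ⊥ := by
  obtain ⟨_, _⟩ := isFiniteLength_iff_isNoetherian_isArtinian.mp hlen
  have hmul : R.toSubmodule * R.toSubmodule ≤ R.toSubmodule :=
    Submodule.mul_le.2 fun f hf g hg => R.mul_mem hf hg
  have hquasi : ∀ r ∈ R.toSubmodule, ∃ u ∈ R.toSubmodule, r + u + u * r = 0 := fun r hr =>
    (hrad r hr).imp fun u hu => ⟨hu.1, hu.2.2⟩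
  obtain ⟨n, hn, hbot⟩ := Submodule.exists_pow_smul_top_eq_bot (M := B) hmul hquasi
  exact ⟨n, hn, Submodule.eq_bot_of_smul_top_eq_bot hbot⟩
end

section
/- Let R be a nonunital associative ring, A a left R-module, and n a positive integer such that for every u ∈ Mat_n(R), the element 1 + u acts injectively on the direct sum of n copies of A. Then every R-submodule C of A generated by n elements satisfying R·C = C must be zero. -/
/-!
Write `Σ v g` for `∑ j, v j • g j`. Each `c ∈ C` is a `ℤ`-combination of the `g i` and `r • g i`,
so `r • c = Σ v g` for some `v`; as `C` is additively generated by such `r • c`, every element of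
`C` is of the form `Σ v g`. Applied to the generators this gives `g = v g` for a matrix `v`, i.e.
`(1 - v) g = 0 = (1 - v) 0`, and injectivity of `1 - v` forces `g = 0`.
-/

section SmulSum

variable {R A ι : Type*} [NonUnitalRing R] [AddCommGroup A] [DistribSMul R A] [Fintype ι]
  (hadd : ∀ (r s : R) (a : A), (r + s) • a = r • a + s • a)

def smulSum (g : ι → A) : (ι → R) →+ A :=
  AddMonoidHom.mk' (fun v => ∑ j, v j • g j) fun v w => by
    simp only [Pi.add_apply, hadd, Finset.sum_add_distrib]

theorem smulSum_apply (g : ι → A) (v : ι → R) : smulSum hadd g v = ∑ j, v j • g j := rfl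

theorem smulSum_single [DecidableEq ι] (g : ι → A) (i : ι) (r : R) :
    smulSum hadd g (Pi.single i r) = r • g i := by
  rw [smulSum_apply, Fintype.sum_eq_single i fun j hj => ?_, Pi.single_eq_same]
  simpa [Pi.single_eq_of_ne hj] using hadd 0 0 (g j)

theorem smul_mem_range_smulSum_of_mem_closure
    (hassoc : ∀ (r s : R) (a : A), (r * s) • a = r • s • a) {g : ι → A} {c : A}
    (hc : c ∈ AddSubgroup.closure ({y | ∃ i, y = g i} ∪ {y | ∃ (r : R) (i : ι), y = r • g i}))
    (r : R) : r • c ∈ (smulSum hadd g).range := by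
  classical
  refine (AddSubgroup.closure_le
    ((smulSum hadd g).range.comap (DistribSMul.toAddMonoidHom A r))).2 ?_ hc
  rintro _ (⟨i, rfl⟩ | ⟨s, i, rfl⟩)
  · exact ⟨Pi.single i r, smulSum_single hadd g i r⟩
  · exact ⟨Pi.single i (r * s), by rw [smulSum_single, hassoc]; rfl⟩

theorem le_range_smulSum (hassoc : ∀ (r s : R) (a : A), (r * s) • a = r • s • a)
    {g : ι → A} {C : AddSubgroup A}
    (hgen : ∀ c ∈ C, c ∈ AddSubgroup.closure
      ({y | ∃ i, y = g i} ∪ {y | ∃ (r : R) (i : ι), y = r • g i}))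
    (hRC : ∀ c ∈ C, c ∈ AddSubgroup.closure {y : A | ∃ (r : R), ∃ c' ∈ C, y = r • c'}) :
    C ≤ (smulSum hadd g).range := by
  refine fun c hc => (AddSubgroup.closure_le _).2 ?_ (hRC c hc)
  rintro _ ⟨r, c', hc', rfl⟩
  exact smul_mem_range_smulSum_of_mem_closure hadd hassoc (hgen c' hc') r

theorem eq_zero_of_forall_eq_smulSum
    (hinj : ∀ u : Matrix ι ι R,
      Function.Injective (fun x : ι → A => fun i => x i + ∑ j, u i j • x j))
    {g : ι → A} (v : Matrix ι ι R) (hg : ∀ i, smulSum hadd g (v i) = g i) : g = 0 := by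
  refine hinj (-v) (funext fun i => ?_)
  have hneg : ∑ j, (-v) i j • g j = -g i := by
    rw [← hg i, ← map_neg]
    rfl
  simp only [hneg, add_neg_cancel, Pi.zero_apply, smul_zero, Finset.sum_const_zero, add_zero]

end SmulSum

theorem nakayama_like_general (R A : Type*) [NonUnitalRing R] [AddCommGroup A] [DistribSMul R A]
    (hadd : ∀ (r s : R) (a : A), (r + s) • a = r • a + s • a)
    (hassoc : ∀ (r s : R) (a : A), (r * s) • a = r • s • a)
    (n : ℕ)
    (hinj : ∀ u : Matrix (Fin n) (Fin n) R,
      Function.Injective (fun x : Fin n → A => fun i => x i + ∑ j, u i j • x j))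
    (C : AddSubgroup A)
    (hgen : ∃ g : Fin n → A, (∀ i, g i ∈ C) ∧
      ∀ c ∈ C, c ∈ AddSubgroup.closure
        ({y : A | ∃ i, y = g i} ∪ {y : A | ∃ (r : R) (i : Fin n), y = r • g i}))
    (hRC : ∀ c ∈ C, c ∈ AddSubgroup.closure {y : A | ∃ (r : R), ∃ c' ∈ C, y = r • c'}) :
    C = ⊥ := by
  obtain ⟨g, hgC, hgen⟩ := hgen
  have hC := le_range_smulSum hadd hassoc hgen hRC
  choose v hv using fun i => hC (hgC i)
  obtain rfl : g = 0 := eq_zero_of_forall_eq_smulSum hadd hinj v hv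
  refine (AddSubgroup.eq_bot_iff_forall C).2 fun c hc => ?_
  obtain ⟨w, rfl⟩ := hC hc
  simp only [smulSum_apply, Pi.zero_apply, smul_zero, Finset.sum_const_zero]

/-- let `R` be a nonunital associative ring, `A` a left `R`-module, and `n`
a positive integer such that for every `u ∈ Mat_n(R)`, the map `1 + u : x ↦ x + ux` acts
injectively on `A^n`.  Then every `R`-submodule `C` of `A` generated by `n` elements and
satisfying `R·C = C` is zero. -/
theorem nakayama_like (R A : Type*) [NonUnitalRing R] [AddCommGroup A] [DistribSMul R A]
    (hadd : ∀ (r s : R) (a : A), (r + s) • a = r • a + s • a)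
    (hassoc : ∀ (r s : R) (a : A), (r * s) • a = r • s • a)
    (n : ℕ) (hn : 0 < n)
    (hinj : ∀ u : Matrix (Fin n) (Fin n) R,
      Function.Injective (fun x : Fin n → A => fun i => x i + ∑ j, u i j • x j))
    (C : AddSubgroup A) (hCsmul : ∀ (r : R), ∀ c ∈ C, r • c ∈ C)
    (hgen : ∃ g : Fin n → A, (∀ i, g i ∈ C) ∧
      ∀ c ∈ C, c ∈ AddSubgroup.closure
        ({y : A | ∃ i, y = g i} ∪ {y : A | ∃ (r : R) (i : Fin n), y = r • g i}))
    (hRC : ∀ c ∈ C, c ∈ AddSubgroup.closure {y : A | ∃ (r : R), ∃ c' ∈ C, y = r • c'}) :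
    C = ⊥ :=
  nakayama_like_general R A hadd hassoc n hinj C hgen hRC
end
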